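/- arXiv:0810.2500 — 4 statements merged into one kernel-verified Lean document; each statement's English description precedes it below -/
import Mathlib

section
/- Let A be a C*-algebra and e ∈ M(A) a projection in its multiplier algebra. If J is a closed essential right ideal of the corner C*-algebra eAe, then the closure of JA + (1-e)A is a closed essential right ideal of A. -/
/-!
Everything but closure under addition is immediate for the closure of `S = J A + (1 - e) A`.
For addition, given `j₁, j₂ ∈ J` put `h = j₁ j₁* + j₂ j₂* ∈ J` and `uₙ = n h (1 + n h)⁻¹`; then
`uₙ = n (h - h uₙ)` lies in `J`, and `‖(1 - uₙ) jᵢ‖² ≤ ‖(1 - uₙ) h (1 - uₙ)‖ ≤ 1 / n` because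
`jᵢ jᵢ* ≤ h`. Hence `j₁ a₁ + j₂ a₂ = lim uₙ (j₁ a₁ + j₂ a₂)` is a limit of elements of `J A`.

Essentiality: for `0 ≠ z ∈ A`, either `z (1 - e) ≠ 0` and then `z · (1 - e) z* ≠ 0`, or `z = z e`,
so that `z* z` is a nonzero element of `e A e`; essentiality of `J` then gives `x ∈ J` with
`z x ≠ 0`, and `z · x (z x)* ≠ 0`.
-/

open Filter Topology

section ApproxUnit

variable {B : Type*} [CStarAlgebra B]

/-- `t ↦ n t / (1 + n t)` on `[0, ∞)`; the `|t|` makes it continuous on all of `ℝ`. -/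
noncomputable def approxUnitFun (n : ℕ) (t : ℝ) : ℝ := n * t / (1 + n * |t|)

@[fun_prop]
lemma continuous_approxUnitFun (n : ℕ) : Continuous (approxUnitFun n) :=
  Continuous.div (by fun_prop) (by fun_prop) fun t => by positivity

/-- `n h (1 + n h)⁻¹` for `h ≥ 0`. -/
noncomputable def approxUnitOf (h : B) (n : ℕ) : B := cfc (approxUnitFun n) h

lemma commute_approxUnitOf {h : B} (hh : IsSelfAdjoint h) (n : ℕ) :
    Commute h (approxUnitOf h n) := by
  simpa only [approxUnitOf, cfc_id' ℝ h] using cfc_commute_cfc (fun t : ℝ => t) _ h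

variable [PartialOrder B] [StarOrderedRing B] {h : B}

lemma approxUnitOf_eq_smul_sub_mul (hh : 0 ≤ h) (n : ℕ) :
    approxUnitOf h n = (n : ℝ) • (h - h * approxUnitOf h n) := by
  calc approxUnitOf h n = cfc (fun t => n * (t - t * approxUnitFun n t)) h := by
        refine cfc_congr fun t ht => ?_
        have ht : 0 ≤ t := spectrum_nonneg_of_nonneg hh ht
        rw [approxUnitFun, abs_of_nonneg ht]
        field_simp
        ring
    _ = (n : ℝ) • (h - h * approxUnitOf h n) := by
        rw [cfc_const_mul .., cfc_sub .., cfc_mul .., cfc_id' ℝ h]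
        rfl

lemma mul_approxUnitOf_of_mul_eq {e : B} (he : e * h = h) (hh : 0 ≤ h) (n : ℕ) :
    e * approxUnitOf h n = approxUnitOf h n := by
  rw [approxUnitOf_eq_smul_sub_mul hh n, mul_smul_comm, mul_sub, ← mul_assoc, he]

lemma approxUnitOf_mul_of_mul_eq {e : B} (he : h * e = h) (hh : 0 ≤ h) (n : ℕ) :
    approxUnitOf h n * e = approxUnitOf h n := by
  rw [approxUnitOf_eq_smul_sub_mul hh n, (commute_approxUnitOf hh.isSelfAdjoint n).eq,
    smul_mul_assoc, sub_mul, mul_assoc, he]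

lemma norm_one_sub_approxUnitOf_mul_mul_le (hh : 0 ≤ h) {n : ℕ} (hn : 0 < n) :
    ‖(1 - approxUnitOf h n) * h * (1 - approxUnitOf h n)‖ ≤ (n : ℝ)⁻¹ := by
  have : (1 - approxUnitOf h n) * h * (1 - approxUnitOf h n) =
      cfc (fun t => (1 - approxUnitFun n t) * t * (1 - approxUnitFun n t)) h := by
    rw [cfc_mul .., cfc_mul .., cfc_sub .., cfc_const_one ℝ h, cfc_id' ℝ h]
    rfl
  rw [this]
  refine norm_cfc_le (by positivity) fun t ht => ?_
  have ht : 0 ≤ t := spectrum_nonneg_of_nonneg hh ht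
  have hn : (0 : ℝ) < n := by exact_mod_cast hn
  have key : (1 - approxUnitFun n t) * t * (1 - approxUnitFun n t) =
      t / (1 + n * t) ^ 2 := by
    rw [approxUnitFun, abs_of_nonneg ht]
    field_simp
    ring
  rw [key, Real.norm_of_nonneg (by positivity), div_le_iff₀ (by positivity), inv_mul_eq_div,
    le_div_iff₀ hn]
  nlinarith [sq_nonneg ((n : ℝ) * t)]

lemma norm_mul_sq_le_of_mul_star_le {v j : B} (hv : IsSelfAdjoint v) (hjh : j * star j ≤ h) :
    ‖v * j‖ ^ 2 ≤ ‖v * h * v‖ := by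
  have hconj : (v * j) * star (v * j) = v * (j * star j) * v := by
    rw [star_mul, hv.star_eq]; noncomm_ring
  rw [sq, ← CStarRing.norm_self_mul_star, hconj]
  refine CStarAlgebra.norm_le_norm_of_nonneg_of_le ?_ ?_
  · simpa only [hv.star_eq] using star_left_conjugate_nonneg (mul_star_self_nonneg j) v
  · simpa only [hv.star_eq] using star_left_conjugate_le_conjugate hjh v

lemma tendsto_approxUnitOf_mul {j : B} (hh : 0 ≤ h) (hjh : j * star j ≤ h) :
    Tendsto (fun n => approxUnitOf h n * j) atTop (𝓝 j) := by
  have hv : ∀ n, IsSelfAdjoint (1 - approxUnitOf h n) := fun n =>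
    .sub (.one B) (cfc_predicate _ h)
  have hbound : ∀ n : ℕ, 0 < n → ‖approxUnitOf h n * j - j‖ ≤ √((n : ℝ)⁻¹) := fun n hn => by
    rw [← norm_neg, neg_sub, ← one_sub_mul]
    exact Real.le_sqrt_of_sq_le <| (norm_mul_sq_le_of_mul_star_le (hv n) hjh).trans
      (norm_one_sub_approxUnitOf_mul_mul_le hh hn)
  have hsqrt : Tendsto (fun n : ℕ => √((n : ℝ)⁻¹)) atTop (𝓝 0) :=
    (Real.continuous_sqrt.tendsto' 0 0 Real.sqrt_zero).comp tendsto_inv_atTop_nhds_zero_nat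
  rw [tendsto_iff_norm_sub_tendsto_zero]
  exact squeeze_zero' (.of_forall fun _ => norm_nonneg _)
    (eventually_atTop.mpr ⟨1, hbound⟩) hsqrt

end ApproxUnit

section Corner

variable {B : Type*} [Ring B]

def corner (e : B) (A : Set B) : Set B := {y | ∃ a ∈ A, y = e * a * e}

/-- `J A + (1 - e) A`, as a set of single elements `j a + (1 - e) c`. -/
def rightIdealOfCorner (e : B) (A J : Set B) : Set B :=
  {y | ∃ j ∈ J, ∃ a ∈ A, ∃ c ∈ A, y = j * a + (c - e * c)}

variable {A J : Set B} {e : B}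

lemma corner_subset (hA_left : ∀ x ∈ A, ∀ b : B, b * x ∈ A)
    (hA_right : ∀ x ∈ A, ∀ b : B, x * b ∈ A) : corner e A ⊆ A := by
  rintro _ ⟨a, ha, rfl⟩
  exact hA_right _ (hA_left a ha e) e

lemma mul_eq_self_of_mem_corner (he_idem : e * e = e) {x : B} (hx : x ∈ corner e A) :
    e * x = x ∧ x * e = x := by
  obtain ⟨a, -, rfl⟩ := hx
  exact ⟨by rw [← mul_assoc, ← mul_assoc, he_idem], by rw [mul_assoc, he_idem]⟩

lemma star_mem_corner [StarRing B] (he_star : star e = e) (hA_star : ∀ x ∈ A, star x ∈ A)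
    {x : B} (hx : x ∈ corner e A) : star x ∈ corner e A := by
  obtain ⟨a, ha, rfl⟩ := hx
  exact ⟨star a, hA_star a ha, by simp only [star_mul, he_star, mul_assoc]⟩

lemma rightIdealOfCorner_subset (hA_add : ∀ x ∈ A, ∀ y ∈ A, x + y ∈ A)
    (hA_left : ∀ x ∈ A, ∀ b : B, b * x ∈ A) (hA_right : ∀ x ∈ A, ∀ b : B, x * b ∈ A)
    (hJA : J ⊆ A) : rightIdealOfCorner e A J ⊆ A := by
  rintro _ ⟨j, hj, a, ha, c, hc, rfl⟩
  rw [← one_sub_mul]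
  exact hA_add _ (hA_right j (hJA hj) a) _ (hA_left c hc _)

lemma zero_mem_rightIdealOfCorner (hA_zero : (0 : B) ∈ A) (hJ_zero : (0 : B) ∈ J) :
    0 ∈ rightIdealOfCorner e A J :=
  ⟨0, hJ_zero, 0, hA_zero, 0, hA_zero, by simp⟩

lemma smul_mem_rightIdealOfCorner [Algebra ℂ B] (hA_smul : ∀ (c : ℂ), ∀ x ∈ A, c • x ∈ A)
    (hJ_smul : ∀ (c : ℂ), ∀ x ∈ J, c • x ∈ J) (c : ℂ) {x : B}
    (hx : x ∈ rightIdealOfCorner e A J) : c • x ∈ rightIdealOfCorner e A J := by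
  obtain ⟨j, hj, a, ha, d, hd, rfl⟩ := hx
  exact ⟨c • j, hJ_smul c j hj, a, ha, c • d, hA_smul c d hd, by
    rw [smul_add, smul_sub, smul_mul_assoc, mul_smul_comm]⟩

lemma mul_mem_rightIdealOfCorner (hA_right : ∀ x ∈ A, ∀ b : B, x * b ∈ A) {x : B}
    (hx : x ∈ rightIdealOfCorner e A J) (a : B) : x * a ∈ rightIdealOfCorner e A J := by
  obtain ⟨j, hj, b, hb, d, hd, rfl⟩ := hx
  exact ⟨j, hj, b * a, hA_right b hb a, d * a, hA_right d hd a, by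
    simp only [add_mul, sub_mul, mul_assoc]⟩

end Corner

section CStarCorner

variable {B : Type*} [CStarAlgebra B] {A J : Set B} {e : B}

lemma approxUnitOf_mem [PartialOrder B] [StarOrderedRing B] {h : B}
    (hA_right : ∀ x ∈ A, ∀ b : B, x * b ∈ A)
    (hJ_add : ∀ x ∈ J, ∀ y ∈ J, x + y ∈ J) (hJ_smul : ∀ (c : ℂ), ∀ x ∈ J, c • x ∈ J)
    (hJ_mul : ∀ x ∈ J, ∀ a ∈ A, x * (e * a * e) ∈ J)
    (hhJ : h ∈ J) (hhA : h ∈ A) (heh : e * h = h) (hhe : h * e = h) (hh : 0 ≤ h) (n : ℕ) :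
    approxUnitOf h n ∈ J := by
  have hu := approxUnitOf_eq_smul_sub_mul hh n
  have hue : e * approxUnitOf h n * e = approxUnitOf h n := by
    rw [mul_approxUnitOf_of_mul_eq heh hh, approxUnitOf_mul_of_mul_eq hhe hh]
  have huA : approxUnitOf h n ∈ A := by
    have : approxUnitOf h n = h * ((n : ℝ) • (1 - approxUnitOf h n)) := by
      rwa [mul_smul_comm, mul_sub, mul_one]
    rw [this]
    exact hA_right h hhA _
  have hhuJ : h * approxUnitOf h n ∈ J := hue ▸ hJ_mul h hhJ _ huA
  rw [hu, ← Complex.coe_smul, sub_eq_add_neg, ← neg_one_smul ℂ (h * _)]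
  exact hJ_smul _ _ (hJ_add _ hhJ _ (hJ_smul _ _ hhuJ))

lemma add_mem_closure_rightIdealOfCorner (hA_add : ∀ x ∈ A, ∀ y ∈ A, x + y ∈ A)
    (hA_left : ∀ x ∈ A, ∀ b : B, b * x ∈ A) (hA_right : ∀ x ∈ A, ∀ b : B, x * b ∈ A)
    (hA_star : ∀ x ∈ A, star x ∈ A) (he_idem : e * e = e) (he_star : star e = e)
    (hJ_sub : J ⊆ corner e A) (hJ_add : ∀ x ∈ J, ∀ y ∈ J, x + y ∈ J)
    (hJ_smul : ∀ (c : ℂ), ∀ x ∈ J, c • x ∈ J) (hJ_mul : ∀ x ∈ J, ∀ a ∈ A, x * (e * a * e) ∈ J)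
    {x y : B} (hx : x ∈ rightIdealOfCorner e A J) (hy : y ∈ rightIdealOfCorner e A J) :
    x + y ∈ closure (rightIdealOfCorner e A J) := by
  let _ : PartialOrder B := CStarAlgebra.spectralOrder B
  let _ : StarOrderedRing B := CStarAlgebra.spectralOrderedRing B
  obtain ⟨j₁, hj₁, a₁, ha₁, c₁, hc₁, rfl⟩ := hx
  obtain ⟨j₂, hj₂, a₂, ha₂, c₂, hc₂, rfl⟩ := hy
  have hJA : J ⊆ A := hJ_sub.trans (corner_subset hA_left hA_right)
  have hmul_star : ∀ j ∈ J, j * star j ∈ J := fun j hj => by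
    obtain ⟨a, ha, hja⟩ := star_mem_corner he_star hA_star (hJ_sub hj)
    rw [hja]
    exact hJ_mul j hj a ha
  set h := j₁ * star j₁ + j₂ * star j₂
  have hhJ : h ∈ J := hJ_add _ (hmul_star j₁ hj₁) _ (hmul_star j₂ hj₂)
  have hh : 0 ≤ h := add_nonneg (mul_star_self_nonneg j₁) (mul_star_self_nonneg j₂)
  have hu (n : ℕ) : approxUnitOf h n ∈ J :=
    approxUnitOf_mem hA_right hJ_add hJ_smul hJ_mul hhJ (hJA hhJ)
      (mul_eq_self_of_mem_corner he_idem (hJ_sub hhJ)).1 (mul_eq_self_of_mem_corner he_idem (hJ_sub hhJ)).2 hh n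
  have hlim : Tendsto (fun n => approxUnitOf h n * (j₁ * a₁ + j₂ * a₂) + (c₁ + c₂ - e * (c₁ + c₂)))
      atTop (𝓝 (j₁ * a₁ + j₂ * a₂ + (c₁ + c₂ - e * (c₁ + c₂)))) := by
    simp only [mul_add, ← mul_assoc]
    have h₁ := tendsto_approxUnitOf_mul hh (le_add_of_nonneg_right (mul_star_self_nonneg j₂))
    have h₂ := tendsto_approxUnitOf_mul hh (le_add_of_nonneg_left (mul_star_self_nonneg j₁))
    exact ((h₁.mul_const a₁).add (h₂.mul_const a₂)).add tendsto_const_nhds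
  have hsum : j₁ * a₁ + (c₁ - e * c₁) + (j₂ * a₂ + (c₂ - e * c₂)) =
      j₁ * a₁ + j₂ * a₂ + (c₁ + c₂ - e * (c₁ + c₂)) := by noncomm_ring
  rw [hsum]
  exact mem_closure_of_tendsto hlim <| .of_forall fun n =>
    ⟨_, hu n, _, hA_add _ (hA_right _ (hJA hj₁) a₁) _ (hA_right _ (hJA hj₂) a₂), _,
      hA_add _ hc₁ _ hc₂, rfl⟩

lemma exists_mem_rightIdealOfCorner_mul_ne_zero (hA_zero : (0 : B) ∈ A)
    (hA_left : ∀ x ∈ A, ∀ b : B, b * x ∈ A) (hA_star : ∀ x ∈ A, star x ∈ A)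
    (he_idem : e * e = e) (he_star : star e = e) (hJ_zero : (0 : B) ∈ J)
    (hJ_ess : ∀ z ∈ corner e A, z ≠ 0 → ∃ x ∈ J, z * x ≠ 0) {z : B} (hz : z ∈ A) (hz0 : z ≠ 0) :
    ∃ x ∈ rightIdealOfCorner e A J, z * x ≠ 0 := by
  by_cases hze : z * e = z
  · have hez : e * star z = star z := by rw [← he_star, ← star_mul, hze]
    have hw : star z * z = e * (star z * z) * e := by
      rw [← mul_assoc, hez, mul_assoc, hze]
    obtain ⟨x, hx, hwx⟩ := hJ_ess _ ⟨_, hA_left z hz (star z), hw⟩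
      ((CStarRing.star_mul_self_ne_zero_iff z).2 hz0)
    have hzx : z * x ≠ 0 := fun h0 => hwx (by rw [mul_assoc, h0, mul_zero])
    refine ⟨x * star (z * x), ⟨x, hx, star (z * x), ?_, 0, hA_zero, by simp⟩, ?_⟩
    · rw [star_mul]
      exact hA_left _ (hA_star z hz) _
    · rw [← mul_assoc]
      exact (CStarRing.mul_star_self_ne_zero_iff _).2 hzx
  · refine ⟨star z - e * star z, ⟨0, hJ_zero, 0, hA_zero, star z, hA_star z hz, by simp⟩, ?_⟩
    have hfac : z * (star z - e * star z) = (z - z * e) * star (z - z * e) := by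
      rw [star_sub, star_mul, he_star, sub_mul, mul_sub, mul_sub, mul_assoc z e (e * star z),
        ← mul_assoc e e, he_idem]
      noncomm_ring
    rw [hfac]
    exact (CStarRing.mul_star_self_ne_zero_iff _).2 (sub_ne_zero.2 (Ne.symm hze))

end CStarCorner

theorem stmt0_general {B : Type*} [CStarAlgebra B] (A : Set B)
    (hA_closed : IsClosed A) (hA_zero : (0 : B) ∈ A)
    (hA_add : ∀ x ∈ A, ∀ y ∈ A, x + y ∈ A)
    (hA_smul : ∀ (c : ℂ), ∀ x ∈ A, c • x ∈ A)
    (hA_star : ∀ x ∈ A, star x ∈ A)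
    (hA_left : ∀ x ∈ A, ∀ b : B, b * x ∈ A)
    (hA_right : ∀ x ∈ A, ∀ b : B, x * b ∈ A)
    (e : B) (he_idem : e * e = e) (he_star : star e = e)
    (J : Set B) (hJ_sub : J ⊆ {y | ∃ a ∈ A, y = e * a * e})
    (hJ_zero : (0 : B) ∈ J)
    (hJ_add : ∀ x ∈ J, ∀ y ∈ J, x + y ∈ J)
    (hJ_smul : ∀ (c : ℂ), ∀ x ∈ J, c • x ∈ J)
    (hJ_mul : ∀ x ∈ J, ∀ a ∈ A, x * (e * a * e) ∈ J)
    (hJ_ess : ∀ z, (∃ a ∈ A, z = e * a * e) → z ≠ 0 → ∃ x ∈ J, z * x ≠ 0) :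
    (closure {y | ∃ j ∈ J, ∃ a ∈ A, ∃ c ∈ A, y = j * a + (c - e * c)}) ⊆ A ∧
    IsClosed (closure {y | ∃ j ∈ J, ∃ a ∈ A, ∃ c ∈ A, y = j * a + (c - e * c)}) ∧
    (0 : B) ∈ closure {y | ∃ j ∈ J, ∃ a ∈ A, ∃ c ∈ A, y = j * a + (c - e * c)} ∧
    (∀ x ∈ closure {y | ∃ j ∈ J, ∃ a ∈ A, ∃ c ∈ A, y = j * a + (c - e * c)},
      ∀ y ∈ closure {y | ∃ j ∈ J, ∃ a ∈ A, ∃ c ∈ A, y = j * a + (c - e * c)},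
        x + y ∈ closure {y | ∃ j ∈ J, ∃ a ∈ A, ∃ c ∈ A, y = j * a + (c - e * c)}) ∧
    (∀ (c : ℂ), ∀ x ∈ closure {y | ∃ j ∈ J, ∃ a ∈ A, ∃ c ∈ A, y = j * a + (c - e * c)},
        c • x ∈ closure {y | ∃ j ∈ J, ∃ a ∈ A, ∃ c ∈ A, y = j * a + (c - e * c)}) ∧
    (∀ x ∈ closure {y | ∃ j ∈ J, ∃ a ∈ A, ∃ c ∈ A, y = j * a + (c - e * c)}, ∀ a ∈ A,
        x * a ∈ closure {y | ∃ j ∈ J, ∃ a ∈ A, ∃ c ∈ A, y = j * a + (c - e * c)}) ∧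
    (∀ z ∈ A, z ≠ 0 →
      ∃ x ∈ closure {y | ∃ j ∈ J, ∃ a ∈ A, ∃ c ∈ A, y = j * a + (c - e * c)}, z * x ≠ 0) := by
  have hJA : J ⊆ A := hJ_sub.trans (corner_subset hA_left hA_right)
  refine ⟨closure_minimal (rightIdealOfCorner_subset hA_add hA_left hA_right hJA) hA_closed,
    isClosed_closure, subset_closure (zero_mem_rightIdealOfCorner hA_zero hJ_zero),
    fun x hx y hy => ?_,
    fun c x hx => map_mem_closure (continuous_const_smul c) hx
      fun y hy => smul_mem_rightIdealOfCorner hA_smul hJ_smul c hy,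
    fun x hx a _ => map_mem_closure (f := (· * a)) (continuous_mul_const a) hx
      fun y hy => mul_mem_rightIdealOfCorner hA_right hy a,
    fun z hz hz0 => ?_⟩
  · rw [← closure_closure]
    exact map_mem_closure₂ continuous_add hx hy fun x hx y hy =>
      add_mem_closure_rightIdealOfCorner hA_add hA_left hA_right hA_star he_idem he_star hJ_sub
        hJ_add hJ_smul hJ_mul hx hy
  · obtain ⟨x, hx, hzx⟩ := exists_mem_rightIdealOfCorner_mul_ne_zero hA_zero hA_left hA_star
      he_idem he_star hJ_zero hJ_ess hz hz0
    exact ⟨x, subset_closure hx, hzx⟩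

/-- Let `A` be a C*-algebra and `e ∈ M(A)` a projection in its multiplier
algebra.  We encode this by taking a unital C*-algebra `B` (playing the role of `M(A)`),
`A ⊆ B` a closed two-sided (star-closed) ideal, and `e ∈ B` with `e = e* = e²`.
If `J` is a closed essential right ideal of the corner C*-algebra `eAe`, then the
closure of `J·A + (1-e)·A` is a closed essential right ideal of `A`.
(A right ideal is essential iff its left annihilator is zero.) -/
theorem stmt0 {B : Type*} [CStarAlgebra B] (A : Set B)
    (hA_closed : IsClosed A) (hA_zero : (0 : B) ∈ A)
    (hA_add : ∀ x ∈ A, ∀ y ∈ A, x + y ∈ A)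
    (hA_smul : ∀ (c : ℂ), ∀ x ∈ A, c • x ∈ A)
    (hA_star : ∀ x ∈ A, star x ∈ A)
    (hA_left : ∀ x ∈ A, ∀ b : B, b * x ∈ A)
    (hA_right : ∀ x ∈ A, ∀ b : B, x * b ∈ A)
    (e : B) (he_idem : e * e = e) (he_star : star e = e)
    (J : Set B) (hJ_sub : J ⊆ {y | ∃ a ∈ A, y = e * a * e})
    (hJ_closed : IsClosed J) (hJ_zero : (0 : B) ∈ J)
    (hJ_add : ∀ x ∈ J, ∀ y ∈ J, x + y ∈ J)
    (hJ_smul : ∀ (c : ℂ), ∀ x ∈ J, c • x ∈ J)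
    (hJ_mul : ∀ x ∈ J, ∀ a ∈ A, x * (e * a * e) ∈ J)
    (hJ_ess : ∀ z, (∃ a ∈ A, z = e * a * e) → z ≠ 0 → ∃ x ∈ J, z * x ≠ 0) :
    (closure {y | ∃ j ∈ J, ∃ a ∈ A, ∃ c ∈ A, y = j * a + (c - e * c)}) ⊆ A ∧
    IsClosed (closure {y | ∃ j ∈ J, ∃ a ∈ A, ∃ c ∈ A, y = j * a + (c - e * c)}) ∧
    (0 : B) ∈ closure {y | ∃ j ∈ J, ∃ a ∈ A, ∃ c ∈ A, y = j * a + (c - e * c)} ∧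
    (∀ x ∈ closure {y | ∃ j ∈ J, ∃ a ∈ A, ∃ c ∈ A, y = j * a + (c - e * c)},
      ∀ y ∈ closure {y | ∃ j ∈ J, ∃ a ∈ A, ∃ c ∈ A, y = j * a + (c - e * c)},
        x + y ∈ closure {y | ∃ j ∈ J, ∃ a ∈ A, ∃ c ∈ A, y = j * a + (c - e * c)}) ∧
    (∀ (c : ℂ), ∀ x ∈ closure {y | ∃ j ∈ J, ∃ a ∈ A, ∃ c ∈ A, y = j * a + (c - e * c)},
        c • x ∈ closure {y | ∃ j ∈ J, ∃ a ∈ A, ∃ c ∈ A, y = j * a + (c - e * c)}) ∧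
    (∀ x ∈ closure {y | ∃ j ∈ J, ∃ a ∈ A, ∃ c ∈ A, y = j * a + (c - e * c)}, ∀ a ∈ A,
        x * a ∈ closure {y | ∃ j ∈ J, ∃ a ∈ A, ∃ c ∈ A, y = j * a + (c - e * c)}) ∧
    (∀ z ∈ A, z ≠ 0 →
      ∃ x ∈ closure {y | ∃ j ∈ J, ∃ a ∈ A, ∃ c ∈ A, y = j * a + (c - e * c)}, z * x ≠ 0) :=
  stmt0_general A hA_closed hA_zero hA_add hA_smul hA_star hA_left hA_right e he_idem he_star J
    hJ_sub hJ_zero hJ_add hJ_smul hJ_mul hJ_ess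
end

section
/- Let R be a semiprime ring and e ∈ R an idempotent. For any essential right ideal I of R, the set eIe is an essential right ideal of the ring eRe. -/
/-!
Every nonzero `k ∈ K ⊆ eRe` has a nonzero multiple `x = k r` in `I`, because `I` meets the
principal right ideal `kR`. Semiprimeness gives `s` with `x s x ≠ 0`, so `y = x s k` is nonzero
(`y r = x s x`). Since `k = e k e`, the element `y = k · (e r s k e)` lies in `K`, and it lies in
`I` and in `eRe`, hence in `eIe`.
-/

theorem exists_mul_mul_ne_zero_of_semiprime {R : Type*} [Mul R] [Zero R]
    (hsp : ∀ a : R, (∀ r : R, a * r * a = 0) → a = 0) {x : R} (hx : x ≠ 0) :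
    ∃ s : R, x * s * x ≠ 0 := by
  by_contra! h
  exact hx (hsp x h)

theorem exists_mul_mem_ne_zero_of_essential {R : Type*} [Ring R] {I : Set R}
    (hI_ess : ∀ K : Set R, (0 : R) ∈ K → (∀ x ∈ K, ∀ y ∈ K, x + y ∈ K) →
      (∀ x ∈ K, -x ∈ K) → (∀ x ∈ K, ∀ r : R, x * r ∈ K) →
      (∃ k ∈ K, k ≠ 0) → ∃ x ∈ I ∩ K, x ≠ 0)
    {k : R} (hk : k ≠ 0) : ∃ r : R, k * r ∈ I ∧ k * r ≠ 0 := by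
  obtain ⟨_, ⟨hxI, r, rfl⟩, hx0⟩ := hI_ess (Set.range (k * ·))
    ⟨0, mul_zero k⟩
    (by rintro _ ⟨a, rfl⟩ _ ⟨b, rfl⟩; exact ⟨a + b, mul_add k a b⟩)
    (by rintro _ ⟨a, rfl⟩; exact ⟨-a, mul_neg k a⟩)
    (by rintro _ ⟨a, rfl⟩ s; exact ⟨a * s, (mul_assoc k a s).symm⟩)
    ⟨k, ⟨1, mul_one k⟩, hk⟩
  exact ⟨r, hxI, hx0⟩

namespace Subsemigroup

variable {R : Type*} [Semigroup R] {e : R}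

theorem mul_mul_eq_of_mem_corner (he : IsIdempotentElem e) {y : R} (hy : y ∈ corner e) :
    e * y * e = y := by
  obtain ⟨hey, hye⟩ := (mem_corner_iff he).1 hy
  rw [hey, hye]

theorem mul_corner_eq_corner_mul (he : IsIdempotentElem e) (x r : R) :
    e * x * e * (e * r * e) = e * (x * (e * r * e)) * e := by
  simp only [mul_assoc, he.eq, he.mul_self_mul]

end Subsemigroup

theorem exists_mul_corner_mem_ne_zero {R : Type*} [Ring R]
    (hsp : ∀ a : R, (∀ r : R, a * r * a = 0) → a = 0)
    {e : R} (he : IsIdempotentElem e) {I : Set R}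
    (hI_mul : ∀ x ∈ I, ∀ r : R, x * r ∈ I)
    (hI_ess : ∀ K : Set R, (0 : R) ∈ K → (∀ x ∈ K, ∀ y ∈ K, x + y ∈ K) →
      (∀ x ∈ K, -x ∈ K) → (∀ x ∈ K, ∀ r : R, x * r ∈ K) →
      (∃ k ∈ K, k ≠ 0) → ∃ x ∈ I ∩ K, x ≠ 0)
    {k : R} (hk : k ∈ Subsemigroup.corner e) (hk0 : k ≠ 0) :
    ∃ c : R, k * (e * c * e) ∈ I ∧ k * (e * c * e) ≠ 0 := by
  obtain ⟨r, hrI, hr0⟩ := exists_mul_mem_ne_zero_of_essential hI_ess hk0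
  obtain ⟨s, hs⟩ := exists_mul_mul_ne_zero_of_semiprime hsp hr0
  have hk_mul_e : k * e = k := ((Subsemigroup.mem_corner_iff he).1 hk).2
  have hy : k * (e * (r * s * k) * e) = k * r * s * k := by
    rw [mul_assoc e, mul_assoc (r * s) k e, hk_mul_e, ← mul_assoc, hk_mul_e]
    simp only [mul_assoc]
  refine ⟨r * s * k, hy ▸ hI_mul _ (hI_mul _ hrI s) k, fun h => hs ?_⟩
  rw [show k * r * s * (k * r) = k * r * s * k * r by simp only [mul_assoc], ← hy, h,
    zero_mul]

/-- Let `R` be a semiprime ring (`aRa = 0 ⟹ a = 0`) and `e ∈ R` an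
idempotent.  For any essential right ideal `I` of `R` (one meeting every nonzero right
ideal of `R` nontrivially), the set `eIe` is an essential right ideal of the corner ring
`eRe`, i.e. `eIe` is a right ideal of `eRe` meeting every nonzero right ideal of `eRe`
nontrivially. -/
theorem stmt3 {R : Type*} [Ring R]
    (hsp : ∀ a : R, (∀ r : R, a * r * a = 0) → a = 0)
    (e : R) (he : e * e = e)
    (I : Set R) (hI_zero : (0 : R) ∈ I)
    (hI_add : ∀ x ∈ I, ∀ y ∈ I, x + y ∈ I)
    (hI_neg : ∀ x ∈ I, -x ∈ I)
    (hI_mul : ∀ x ∈ I, ∀ r : R, x * r ∈ I)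
    (hI_ess : ∀ K : Set R, (0 : R) ∈ K → (∀ x ∈ K, ∀ y ∈ K, x + y ∈ K) →
      (∀ x ∈ K, -x ∈ K) → (∀ x ∈ K, ∀ r : R, x * r ∈ K) →
      (∃ k ∈ K, k ≠ 0) → ∃ x ∈ I ∩ K, x ≠ 0) :
    {y | ∃ x ∈ I, y = e * x * e} ⊆ {y | ∃ r : R, y = e * r * e} ∧
    (0 : R) ∈ {y | ∃ x ∈ I, y = e * x * e} ∧
    (∀ u ∈ {y | ∃ x ∈ I, y = e * x * e}, ∀ v ∈ {y | ∃ x ∈ I, y = e * x * e},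
        u + v ∈ {y | ∃ x ∈ I, y = e * x * e}) ∧
    (∀ u ∈ {y | ∃ x ∈ I, y = e * x * e}, -u ∈ {y | ∃ x ∈ I, y = e * x * e}) ∧
    (∀ u ∈ {y | ∃ x ∈ I, y = e * x * e}, ∀ r : R,
        u * (e * r * e) ∈ {y | ∃ x ∈ I, y = e * x * e}) ∧
    (∀ K : Set R, K ⊆ {y | ∃ r : R, y = e * r * e} → (0 : R) ∈ K →
      (∀ x ∈ K, ∀ y ∈ K, x + y ∈ K) → (∀ x ∈ K, -x ∈ K) →
      (∀ x ∈ K, ∀ r : R, x * (e * r * e) ∈ K) →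
      (∃ k ∈ K, k ≠ 0) → ∃ x ∈ {y | ∃ x ∈ I, y = e * x * e} ∩ K, x ≠ 0) := by
  refine ⟨?_, ⟨0, hI_zero, by simp⟩, ?_, ?_, ?_, ?_⟩
  · rintro _ ⟨x, -, rfl⟩
    exact ⟨x, rfl⟩
  · rintro _ ⟨x, hx, rfl⟩ _ ⟨x', hx', rfl⟩
    exact ⟨x + x', hI_add x hx x' hx', by simp only [mul_add, add_mul]⟩
  · rintro _ ⟨x, hx, rfl⟩
    exact ⟨-x, hI_neg x hx, by simp only [mul_neg, neg_mul]⟩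
  · rintro _ ⟨x, hx, rfl⟩ r
    exact ⟨x * (e * r * e), hI_mul x hx _, Subsemigroup.mul_corner_eq_corner_mul he x r⟩
  · rintro K hK_corner - - - hK_mul ⟨k, hk, hk0⟩
    have hk_corner : k ∈ Subsemigroup.corner e :=
      let ⟨a, ha⟩ := hK_corner hk
      ⟨a, ha.symm⟩
    obtain ⟨c, hcI, hc0⟩ := exists_mul_corner_mem_ne_zero hsp he hI_mul hI_ess hk_corner hk0
    have hc_corner := (Subsemigroup.corner e).mul_mem hk_corner ⟨c, rfl⟩
    exact ⟨_, ⟨⟨_, hcI, (Subsemigroup.mul_mul_eq_of_mem_corner he hc_corner).symm⟩,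
      hK_mul k hk c⟩, hc0⟩
end

section
/- Let R be a semiprime ring with involution and e ∈ R a projection (self-adjoint idempotent). If J is an essential right ideal of eRe, then JR + (1-e)R(eRe)R + (ReR)^⊥ is an essential right ideal of R, where (ReR)^⊥ denotes the annihilator {x ∈ R : xReR = 0}. -/
/-!
Let `I` be the additive subgroup in question. It is a right ideal because each of its three
generating sets is closed under right multiplication. For essentiality, take a right ideal `K ≠ 0`.
Either `K` annihilates `ReR`, so `K ⊆ I`, or some `b = k r e ∈ K` is nonzero, with `b e = b`.
If `e b R e = 0`, semiprimeness forces `e b = 0`, so `b = (1 - e) b (e 1 e)` is a generator of `I`.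
Otherwise `e b R e` is a nonzero right ideal of `eRe`, so it contains some `x = e b r e ≠ 0` of `J`;
then `y = b r e ∈ K` splits as `y = e y + (1 - e) y = x + (1 - e) b (e r e) ∈ I`, and `e y = x ≠ 0`.
-/

theorem AddSubgroup.mul_mem_closure_of_forall_mul_mem {R : Type*} [NonUnitalNonAssocRing R]
    {S : Set R} (hS : ∀ y ∈ S, ∀ r : R, y * r ∈ S) {x : R} (hx : x ∈ AddSubgroup.closure S)
    (r : R) :
    x * r ∈ AddSubgroup.closure S := by
  induction hx using AddSubgroup.closure_induction with
  | mem y hy => exact AddSubgroup.subset_closure (hS y hy r)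
  | zero => simp
  | add a b _ _ ha hb => simpa only [add_mul] using add_mem ha hb
  | neg a _ ha => simpa only [neg_mul] using neg_mem ha

section CornerExtension

variable {R : Type*} [Ring R] {e b : R} {J : Set R}

/-- Generators of `JR + (1 - e)R(eRe)R + (ReR)^⊥`. -/
def cornerExtensionGenerators (e : R) (J : Set R) : Set R :=
  {y | ∃ j ∈ J, ∃ r : R, y = j * r} ∪
    {y | ∃ r s t : R, y = (1 - e) * r * (e * s * e) * t} ∪
    {x : R | ∀ r s : R, x * (r * e * s) = 0}

theorem mul_mem_cornerExtensionGenerators {y : R} (hy : y ∈ cornerExtensionGenerators e J)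
    (r : R) : y * r ∈ cornerExtensionGenerators e J := by
  rcases hy with (⟨j, hj, r', rfl⟩ | ⟨a, s, t, rfl⟩) | hann
  · exact Or.inl (Or.inl ⟨j, hj, r' * r, by noncomm_ring⟩)
  · exact Or.inl (Or.inr ⟨a, s, t * r, by noncomm_ring⟩)
  · refine Or.inr fun u v => ?_
    simpa only [mul_assoc] using hann (r * u) v

theorem exists_mem_ne_zero_mul_eq_self {K : Set R} (he : e * e = e)
    (hK : ∀ x ∈ K, ∀ r : R, x * r ∈ K) {k r s : R} (hk : k ∈ K) (hkrs : k * (r * e * s) ≠ 0) :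
    ∃ b ∈ K, b ≠ 0 ∧ b * e = b := by
  refine ⟨k * (r * e), hK k hk _, fun hb => hkrs ?_, by simp only [mul_assoc, he]⟩
  simp only [← mul_assoc] at hb ⊢
  rw [hb, zero_mul]

theorem mul_eq_zero_of_forall_corner_eq_zero (hsp : ∀ a : R, (∀ r : R, a * r * a = 0) → a = 0)
    (hbe : b * e = b) (h : ∀ r : R, e * b * r * e = 0) : e * b = 0 :=
  hsp _ fun r => by simpa only [mul_assoc, hbe] using h (r * e * b)

theorem mem_cornerExtensionGenerators_of_mul_eq_zero (hbe : b * e = b) (heb : e * b = 0) :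
    b ∈ cornerExtensionGenerators e J :=
  Or.inl <| Or.inr ⟨b, 1, 1, by
    simp only [sub_mul, one_mul, mul_one, heb, sub_zero, ← mul_assoc, hbe]⟩

theorem exists_mem_corner_ne_zero
    (hJ_ess : ∀ K : Set R, K ⊆ {y | ∃ r : R, y = e * r * e} → (0 : R) ∈ K →
      (∀ x ∈ K, ∀ y ∈ K, x + y ∈ K) → (∀ x ∈ K, -x ∈ K) →
      (∀ x ∈ K, ∀ r : R, x * (e * r * e) ∈ K) →
      (∃ k ∈ K, k ≠ 0) → ∃ x ∈ J ∩ K, x ≠ 0)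
    (h : ∃ r : R, e * b * r * e ≠ 0) : ∃ r : R, e * b * r * e ∈ J ∧ e * b * r * e ≠ 0 := by
  obtain ⟨r, hr⟩ := h
  obtain ⟨x, ⟨hxJ, r', rfl⟩, hx⟩ := hJ_ess {y | ∃ r : R, y = e * b * r * e}
    (fun y ⟨r, hr⟩ => ⟨b * r, by rw [hr, mul_assoc e b]⟩) ⟨0, by simp⟩
    (by rintro _ ⟨r₁, rfl⟩ _ ⟨r₂, rfl⟩; exact ⟨r₁ + r₂, by noncomm_ring⟩)
    (by rintro _ ⟨r₁, rfl⟩; exact ⟨-r₁, by noncomm_ring⟩)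
    (by rintro _ ⟨r₁, rfl⟩ s; exact ⟨r₁ * e * e * s, by noncomm_ring⟩)
    ⟨_, ⟨r, rfl⟩, hr⟩
  exact ⟨r', hxJ, hx⟩

theorem mem_closure_cornerExtensionGenerators (hbe : b * e = b) {r : R}
    (hJ : e * b * r * e ∈ J) : b * r * e ∈ AddSubgroup.closure (cornerExtensionGenerators e J) := by
  have hsplit : b * r * e = e * b * r * e + (1 - e) * b * (e * r * e) * 1 := by
    calc b * r * e = e * b * r * e + (1 - e) * (b * e) * r * e := by rw [hbe]; noncomm_ring
      _ = _ := by noncomm_ring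
  rw [hsplit]
  exact add_mem (AddSubgroup.subset_closure (Or.inl (Or.inl ⟨_, hJ, 1, (mul_one _).symm⟩)))
    (AddSubgroup.subset_closure (Or.inl (Or.inr ⟨b, r, 1, rfl⟩)))

end CornerExtension

theorem stmt4_general {R : Type*} [Ring R]
    (hsp : ∀ a : R, (∀ r : R, a * r * a = 0) → a = 0)
    (e : R) (he_idem : e * e = e)
    (J : Set R)
    (hJ_ess : ∀ K : Set R, K ⊆ {y | ∃ r : R, y = e * r * e} → (0 : R) ∈ K →
      (∀ x ∈ K, ∀ y ∈ K, x + y ∈ K) → (∀ x ∈ K, -x ∈ K) →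
      (∀ x ∈ K, ∀ r : R, x * (e * r * e) ∈ K) →
      (∃ k ∈ K, k ≠ 0) → ∃ x ∈ J ∩ K, x ≠ 0) :
    (∀ x ∈ (AddSubgroup.closure
        ({y | ∃ j ∈ J, ∃ r : R, y = j * r} ∪
         {y | ∃ r s t : R, y = (1 - e) * r * (e * s * e) * t} ∪
         {x : R | ∀ r s : R, x * (r * e * s) = 0}) : Set R),
      ∀ r : R, x * r ∈ (AddSubgroup.closure
        ({y | ∃ j ∈ J, ∃ r : R, y = j * r} ∪
         {y | ∃ r s t : R, y = (1 - e) * r * (e * s * e) * t} ∪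
         {x : R | ∀ r s : R, x * (r * e * s) = 0}) : Set R)) ∧
    (∀ K : Set R, (0 : R) ∈ K → (∀ x ∈ K, ∀ y ∈ K, x + y ∈ K) →
      (∀ x ∈ K, -x ∈ K) → (∀ x ∈ K, ∀ r : R, x * r ∈ K) →
      (∃ k ∈ K, k ≠ 0) →
      ∃ x ∈ (AddSubgroup.closure
        ({y | ∃ j ∈ J, ∃ r : R, y = j * r} ∪
         {y | ∃ r s t : R, y = (1 - e) * r * (e * s * e) * t} ∪
         {x : R | ∀ r s : R, x * (r * e * s) = 0}) : Set R) ∩ K, x ≠ 0) := by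
  change (∀ x ∈ AddSubgroup.closure (cornerExtensionGenerators e J), _) ∧
    ∀ K : Set R, _ → _ → _ → _ → _ →
      ∃ x ∈ (AddSubgroup.closure (cornerExtensionGenerators e J) : Set R) ∩ K, x ≠ 0
  refine ⟨fun x hx => AddSubgroup.mul_mem_closure_of_forall_mul_mem
    (fun _ => mul_mem_cornerExtensionGenerators) hx, ?_⟩
  intro K _ _ _ hK ⟨k₀, hk₀, hk₀_ne⟩
  by_cases hann : ∀ k ∈ K, ∀ r s : R, k * (r * e * s) = 0
  · exact ⟨k₀, ⟨AddSubgroup.subset_closure (Or.inr (hann k₀ hk₀)), hk₀⟩, hk₀_ne⟩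
  push Not at hann
  obtain ⟨k, hk, r, s, hkrs⟩ := hann
  obtain ⟨b, hb, hb_ne, hbe⟩ := exists_mem_ne_zero_mul_eq_self he_idem hK hk hkrs
  by_cases hcorner : ∀ r : R, e * b * r * e = 0
  · exact ⟨b, ⟨AddSubgroup.subset_closure (mem_cornerExtensionGenerators_of_mul_eq_zero hbe
      (mul_eq_zero_of_forall_corner_eq_zero hsp hbe hcorner)), hb⟩, hb_ne⟩
  push Not at hcorner
  obtain ⟨r', hJ, hne⟩ := exists_mem_corner_ne_zero hJ_ess hcorner
  refine ⟨b * r' * e, ⟨mem_closure_cornerExtensionGenerators hbe hJ, hK _ (hK b hb r') e⟩, ?_⟩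
  have hcorner_eq : e * (b * r' * e) = e * b * r' * e := by noncomm_ring
  exact fun h => hne (by rw [← hcorner_eq, h, mul_zero])

/-- Let `R` be a unital semiprime ring with involution and `e ∈ R` a
projection (`e = e* = e²`).  If `J` is an essential right ideal of the corner ring `eRe`,
then `JR + (1-e)R(eRe)R + (ReR)^⊥` (the additive subgroup generated by products
`j*r`, `(1-e)*r*(e*s*e)*t`, and elements of the annihilator `{x | xReR = 0}`) is an
essential right ideal of `R`. -/
theorem stmt4 {R : Type*} [Ring R] [StarRing R]
    (hsp : ∀ a : R, (∀ r : R, a * r * a = 0) → a = 0)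
    (e : R) (he_idem : e * e = e) (he_star : star e = e)
    (J : Set R) (hJ_sub : J ⊆ {y | ∃ r : R, y = e * r * e})
    (hJ_zero : (0 : R) ∈ J)
    (hJ_add : ∀ x ∈ J, ∀ y ∈ J, x + y ∈ J)
    (hJ_neg : ∀ x ∈ J, -x ∈ J)
    (hJ_mul : ∀ x ∈ J, ∀ r : R, x * (e * r * e) ∈ J)
    (hJ_ess : ∀ K : Set R, K ⊆ {y | ∃ r : R, y = e * r * e} → (0 : R) ∈ K →
      (∀ x ∈ K, ∀ y ∈ K, x + y ∈ K) → (∀ x ∈ K, -x ∈ K) →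
      (∀ x ∈ K, ∀ r : R, x * (e * r * e) ∈ K) →
      (∃ k ∈ K, k ≠ 0) → ∃ x ∈ J ∩ K, x ≠ 0) :
    (∀ x ∈ (AddSubgroup.closure
        ({y | ∃ j ∈ J, ∃ r : R, y = j * r} ∪
         {y | ∃ r s t : R, y = (1 - e) * r * (e * s * e) * t} ∪
         {x : R | ∀ r s : R, x * (r * e * s) = 0}) : Set R),
      ∀ r : R, x * r ∈ (AddSubgroup.closure
        ({y | ∃ j ∈ J, ∃ r : R, y = j * r} ∪
         {y | ∃ r s t : R, y = (1 - e) * r * (e * s * e) * t} ∪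
         {x : R | ∀ r s : R, x * (r * e * s) = 0}) : Set R)) ∧
    (∀ K : Set R, (0 : R) ∈ K → (∀ x ∈ K, ∀ y ∈ K, x + y ∈ K) →
      (∀ x ∈ K, -x ∈ K) → (∀ x ∈ K, ∀ r : R, x * r ∈ K) →
      (∃ k ∈ K, k ≠ 0) →
      ∃ x ∈ (AddSubgroup.closure
        ({y | ∃ j ∈ J, ∃ r : R, y = j * r} ∪
         {y | ∃ r s t : R, y = (1 - e) * r * (e * s * e) * t} ∪
         {x : R | ∀ r s : R, x * (r * e * s) = 0}) : Set R) ∩ K, x ≠ 0) :=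
  stmt4_general hsp e he_idem J hJ_ess
end

section
/- Let A be a C*-algebra and e ∈ A a projection. If I is a closed essential right ideal of A and z is a nonzero element of eAe, then there exists a ∈ A with za ∈ I and za ≠ 0, and moreover there exists t ∈ eAe with zt a nonzero element of eIe. -/
/-! Take `a` from essentiality, so that `u = z * a` is a nonzero element of `I`. Since `e * u = u`
and `e` is self-adjoint, `star u * e = star u`; hence `t = e * (a * star u) * e ∈ eAe` satisfies
`z * t = u * star u`, which lies in `I`, is fixed by compression with `e`, and is nonzero by the
C*-identity. -/

section Corner

variable {R : Type*} [Semigroup R] {e : R}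

theorem IsIdempotentElem.mul_corner_mul (he : IsIdempotentElem e) (r a : R) :
    e * (e * r * e * a) = e * r * e * a := by
  simp only [← mul_assoc, he.eq]

theorem IsIdempotentElem.corner_mul (he : IsIdempotentElem e) (r : R) :
    e * r * e * e = e * r * e := by
  rw [mul_assoc, he.eq]

variable [StarMul R] (he : IsSelfAdjoint e) {u : R}
include he

theorem IsSelfAdjoint.star_mul_eq_star_of_mul_eq (hu : e * u = u) : star u * e = star u := by
  rw [← he.star_eq, ← star_mul, hu]

theorem IsSelfAdjoint.mul_mul_star_mul_eq_of_mul_eq (hu : e * u = u) :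
    e * (u * star u) * e = u * star u := by
  rw [← mul_assoc, hu, mul_assoc, he.star_mul_eq_star_of_mul_eq hu]

theorem IsSelfAdjoint.corner_mul_compress_eq (he_idem : IsIdempotentElem e) (r a : R) :
    e * r * e * (e * (a * star (e * r * e * a)) * e)
      = e * r * e * a * star (e * r * e * a) := by
  simp only [← mul_assoc, he_idem.corner_mul]
  rw [mul_assoc _ (star _) e, he.star_mul_eq_star_of_mul_eq (he_idem.mul_corner_mul r a)]

end Corner

theorem stmt11_general {A : Type*} [NonUnitalCStarAlgebra A]
    (e : A) (he_idem : e * e = e) (he_star : star e = e)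
    (I : Set A)
    (hI_mul : ∀ x ∈ I, ∀ a : A, x * a ∈ I)
    (hI_ess : ∀ u : A, u ≠ 0 → ∃ a : A, u * a ∈ I ∧ u * a ≠ 0)
    (z : A) (hz : ∃ r : A, z = e * r * e) (hz_ne : z ≠ 0) :
    (∃ a : A, z * a ∈ I ∧ z * a ≠ 0) ∧
    (∃ t : A, (∃ r : A, t = e * r * e) ∧ z * t ≠ 0 ∧ ∃ x ∈ I, z * t = e * x * e) := by
  have he : IsSelfAdjoint e := he_star
  obtain ⟨a, haI, hane⟩ := hI_ess z hz_ne
  obtain ⟨r, rfl⟩ := hz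
  have hzt := he.corner_mul_compress_eq he_idem r a
  refine ⟨⟨a, haI, hane⟩, e * (a * star (e * r * e * a)) * e, ⟨_, rfl⟩, ?_,
    _, hI_mul _ haI (star (e * r * e * a)), ?_⟩
  · rw [hzt]
    exact (CStarRing.mul_star_self_ne_zero_iff _).mpr hane
  · rw [hzt, he.mul_mul_star_mul_eq_of_mul_eq (IsIdempotentElem.mul_corner_mul he_idem r a)]

/-- Let `A` be a C*-algebra and `e ∈ A` a projection.  If `I` is a closed
essential right ideal of `A` (essential: for every nonzero `z` there is `a` with
`0 ≠ z*a ∈ I`) and `z` is a nonzero element of `eAe`, then there exists `a ∈ A` with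
`z*a ∈ I` and `z*a ≠ 0`, and moreover there exists `t ∈ eAe` with `z*t` a nonzero
element of `eIe`. -/
theorem stmt11 {A : Type*} [NonUnitalCStarAlgebra A]
    (e : A) (he_idem : e * e = e) (he_star : star e = e)
    (I : Set A) (hI_closed : IsClosed I) (hI_zero : (0 : A) ∈ I)
    (hI_add : ∀ x ∈ I, ∀ y ∈ I, x + y ∈ I)
    (hI_smul : ∀ (c : ℂ), ∀ x ∈ I, c • x ∈ I)
    (hI_mul : ∀ x ∈ I, ∀ a : A, x * a ∈ I)
    (hI_ess : ∀ u : A, u ≠ 0 → ∃ a : A, u * a ∈ I ∧ u * a ≠ 0)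
    (z : A) (hz : ∃ r : A, z = e * r * e) (hz_ne : z ≠ 0) :
    (∃ a : A, z * a ∈ I ∧ z * a ≠ 0) ∧
    (∃ t : A, (∃ r : A, t = e * r * e) ∧ z * t ≠ 0 ∧ ∃ x ∈ I, z * t = e * x * e) :=
  stmt11_general e he_idem he_star I hI_mul hI_ess z hz hz_ne
end
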